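/- If a subset K of 𝔓_r is precompact in the Rokhlin metric, then K has bounded mean complexity: for every ε > 0 there is a constant C such that for every finite subset E of K, one can cover all but ε of the measure of X by at most C Hamming balls of radius ε with respect to E. -/

import Mathlib

open MeasureTheory Filter Real Topology
open scoped symmDiff ENNReal

variable {X : Type*} [MeasurableSpace X]

/-- A finite measurable partition of `X` (mod `μ`-null sets), with atoms indexed by `ι`. -/
def IsPartition (μ : Measure X) {ι : Type*} (A : ι → Set X) : Prop :=
  (∀ i, MeasurableSet (A i)) ∧ Pairwise (Function.onFun Disjoint A) ∧ μ (⋃ i, A i)ᶜ = 0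

/-- `μ(A|B)`, with the convention that it is `0` when `μ B = 0`. -/
noncomputable def condProb (μ : Measure X) (A B : Set X) : ℝ :=
  if μ B = 0 then 0 else (μ (A ∩ B)).toReal / (μ B).toReal

/-- Conditional entropy `H_μ(α|β)` of two finite partitions. -/
noncomputable def condEntropy' (μ : Measure X) {ι κ : Type*} [Fintype ι] [Fintype κ]
    (A : ι → Set X) (B : κ → Set X) : ℝ :=
  ∑ j, (μ (B j)).toReal * ∑ i, Real.negMulLog (condProb μ (A i) (B j))

/-- The Rokhlin distance `ρ(α,β) = H_μ(α|β) + H_μ(β|α)`. -/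
noncomputable def rokhlinDist (μ : Measure X) {ι κ : Type*} [Fintype ι] [Fintype κ]
    (A : ι → Set X) (B : κ → Set X) : ℝ :=
  condEntropy' μ A B + condEntropy' μ B A

/-- Shannon entropy `H_μ(α)` of a finite partition. -/
noncomputable def partEntropy (μ : Measure X) {ι : Type*} [Fintype ι] (A : ι → Set X) : ℝ :=
  ∑ i, Real.negMulLog (μ (A i)).toReal

/-- Entropy of the join `⋁_{i=1}^n α_i` of `n` finite partitions. -/
noncomputable def jointEntropy (μ : Measure X) {n : ℕ} {ι : Type*} [Fintype ι]
    (A : Fin n → ι → Set X) : ℝ :=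
  ∑ f : Fin n → ι, Real.negMulLog (μ (⋂ i, A i (f i))).toReal

/-- `ρ̃(α,β)`: the minimal total symmetric difference over matchings of atoms. -/
noncomputable def rhoTilde (μ : Measure X) {r : ℕ} (A B : Fin r → Set X) : ℝ :=
  ⨅ σ : Equiv.Perm (Fin r), ∑ i, (μ (A i ∆ B (σ i))).toReal

/-- Total boundedness (precompactness) of a set w.r.t. a distance-like function. -/
def TotBddIn {α : Type*} (d : α → α → ℝ) (K : Set α) : Prop :=
  ∀ ε > 0, ∃ F : Finset α, ↑F ⊆ K ∧ ∀ a ∈ K, ∃ b ∈ F, d a b < ε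

open Classical in
/-- Normalized Hamming distance w.r.t. a finite family `E` of partitions. -/
noncomputable def hamDist {r : ℕ} (E : Finset (Fin r → Set X)) (x y : X) : ℝ :=
  ((E.filter fun α => ∀ i, ¬(x ∈ α i ∧ y ∈ α i)).card : ℝ) / E.card

/-- Ball for the normalized Hamming distance. -/
def hamBall {r : ℕ} (E : Finset (Fin r → Set X)) (x : X) (ε : ℝ) : Set X :=
  {y | hamDist E x y < ε}

/-!
Fix a finite `δ`-net `F ⊆ K` for the Rokhlin metric. If `ρ(α, β) < δ`, a Fano-type inequality
(`1 - max p ≤ H(p)` applied to the conditional distributions of `α` on the atoms of `β`) gives a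
set `G` with `μ Gᶜ ≤ δ` on which the atom of `α` containing a point is determined by its atom of
`β`. By Markov's inequality, off a set of measure `≤ ε/2` a point lies in `G_α` for all but a
fraction `ε/3` of the `α ∈ E`, and two such points in the same atom of the join `⋁ F` are at
Hamming distance `≤ 2ε/3`. One such point per atom of `⋁ F` therefore suffices, and the number of
atoms depends only on `F`.
-/

open scoped Finset

section Entropy

variable {μ : Measure X} {ι κ : Type*}

lemma IsPartition.nonempty_index [NeZero μ] {A : ι → Set X} (hA : IsPartition μ A) :
    Nonempty ι := by
  by_contra h
  rw [not_nonempty_iff] at h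
  exact NeZero.ne μ (by simpa using hA.2.2)

omit [MeasurableSpace X] in
lemma exists_mem_and_mem_of_mem_iUnion_inter {A : ι → Set X} {B : κ → Set X}
    (hB : Pairwise (Function.onFun Disjoint B)) {φ : κ → ι} {x y : X}
    (hx : x ∈ ⋃ j, B j ∩ A (φ j)) (hy : y ∈ ⋃ j, B j ∩ A (φ j))
    (hxy : ∀ j, x ∈ B j → y ∈ B j) : ∃ i, x ∈ A i ∧ y ∈ A i := by
  obtain ⟨j, hxB, hxA⟩ := Set.mem_iUnion.1 hx
  obtain ⟨k, hyB, hyA⟩ := Set.mem_iUnion.1 hy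
  obtain rfl : j = k := hB.eq (Set.not_disjoint_iff.2 ⟨y, hxy j hxB, hyB⟩)
  exact ⟨φ j, hxA, hyA⟩

variable [Fintype ι] [Fintype κ]

lemma condProb_nonneg (A B : Set X) : 0 ≤ condProb μ A B := by
  unfold condProb; split <;> positivity

lemma condProb_le_one [IsFiniteMeasure μ] (A B : Set X) :
    condProb μ A B ≤ 1 := by
  unfold condProb
  split
  · exact zero_le_one
  · exact div_le_one_of_le₀ (measureReal_mono Set.inter_subset_right) ENNReal.toReal_nonneg

lemma mul_sum_negMulLog_condProb_nonneg [IsFiniteMeasure μ] (A : ι → Set X) (B : Set X) :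
    0 ≤ (μ B).toReal * ∑ i, negMulLog (condProb μ (A i) B) :=
  mul_nonneg ENNReal.toReal_nonneg <| Finset.sum_nonneg fun _ _ =>
    negMulLog_nonneg (condProb_nonneg _ _) (condProb_le_one _ _)

lemma condEntropy'_nonneg [IsFiniteMeasure μ] (A : ι → Set X) (B : κ → Set X) :
    0 ≤ condEntropy' μ A B :=
  Finset.sum_nonneg fun j _ => mul_sum_negMulLog_condProb_nonneg A (B j)

lemma condEntropy'_le_rokhlinDist [IsFiniteMeasure μ] (A : ι → Set X) (B : κ → Set X) :
    condEntropy' μ A B ≤ rokhlinDist μ A B :=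
  le_add_of_nonneg_right (condEntropy'_nonneg B A)

lemma IsPartition.sum_condProb [IsFiniteMeasure μ] {A : ι → Set X} (hA : IsPartition μ A)
    {B : Set X} (hB : MeasurableSet B) (hB0 : μ B ≠ 0) : ∑ i, condProb μ (A i) B = 1 := by
  have hsum : ∑ i, μ (A i ∩ B) = μ B := by
    rw [← measure_inter_conull hA.2.2, Set.inter_comm, Set.iUnion_inter,
      measure_iUnion (fun i j hij => (hA.2.1 hij).mono Set.inter_subset_left
        Set.inter_subset_left) fun i => (hA.1 i).inter hB, tsum_fintype]
  simp only [condProb, if_neg hB0, ← Finset.sum_div]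
  rw [← ENNReal.toReal_sum fun _ _ => measure_ne_top μ _, hsum,
    div_self (ENNReal.toReal_ne_zero.2 ⟨hB0, measure_ne_top μ B⟩)]

lemma exists_one_sub_le_sum_negMulLog [Nonempty ι] {p : ι → ℝ} (hp : ∀ i, 0 ≤ p i)
    (hsum : ∑ i, p i = 1) : ∃ i, 1 - p i ≤ ∑ j, negMulLog (p j) := by
  obtain ⟨i, hi⟩ := Finite.exists_max p
  have hpi : 0 < p i := by
    by_contra! h
    have : ∑ j, p j ≤ 0 := Finset.sum_nonpos fun j _ => (hi j).trans h
    linarith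
  refine ⟨i, ?_⟩
  calc 1 - p i ≤ -log (p i) := by linarith [log_le_sub_one_of_pos hpi]
    _ = ∑ j, p j * -log (p i) := by rw [← Finset.sum_mul, hsum, one_mul]
    _ ≤ ∑ j, negMulLog (p j) := Finset.sum_le_sum fun j _ => by
        rcases (hp j).eq_or_lt with h | h
        · simp [← h]
        · rw [negMulLog, neg_mul, mul_neg]
          exact neg_le_neg (mul_le_mul_of_nonneg_left (log_le_log h (hi j)) h.le)

lemma exists_measure_diff_le_mul_sum_negMulLog [IsFiniteMeasure μ] [Nonempty ι]
    {A : ι → Set X} (hA : IsPartition μ A) {B : Set X} (hB : MeasurableSet B) :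
    ∃ i, μ (B \ A i) ≤ ENNReal.ofReal ((μ B).toReal * ∑ i', negMulLog (condProb μ (A i') B)) := by
  by_cases hB0 : μ B = 0
  · exact ⟨Classical.arbitrary ι, by simp [measure_mono_null Set.sdiff_subset hB0]⟩
  obtain ⟨i, hi⟩ := exists_one_sub_le_sum_negMulLog (fun i => condProb_nonneg (A i) B)
    (hA.sum_condProb hB hB0)
  refine ⟨i, ?_⟩
  have hdiff : (μ (B \ A i)).toReal = (μ B).toReal * (1 - condProb μ (A i) B) := by
    have hadd := measureReal_inter_add_sdiff (μ := μ) (s := B) (hA.1 i)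
    rw [condProb, if_neg hB0, mul_one_sub,
      mul_div_cancel₀ _ (ENNReal.toReal_ne_zero.2 ⟨hB0, measure_ne_top μ B⟩), Set.inter_comm]
    simp only [measureReal_def] at hadd
    linarith
  rw [← ENNReal.ofReal_toReal (measure_ne_top μ _), hdiff]
  exact ENNReal.ofReal_le_ofReal (mul_le_mul_of_nonneg_left hi ENNReal.toReal_nonneg)

lemma exists_measure_compl_iUnion_inter_le_condEntropy' [IsFiniteMeasure μ] [NeZero μ]
    {A : ι → Set X} {B : κ → Set X} (hA : IsPartition μ A) (hB : IsPartition μ B) :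
    ∃ φ : κ → ι, μ (⋃ j, B j ∩ A (φ j))ᶜ ≤ ENNReal.ofReal (condEntropy' μ A B) := by
  have := hA.nonempty_index
  choose φ hφ using fun j => exists_measure_diff_le_mul_sum_negMulLog hA (hB.1 j)
  refine ⟨φ, ?_⟩
  have hsub : (⋃ j, B j ∩ A (φ j))ᶜ ∩ ⋃ j, B j ⊆ ⋃ j, B j \ A (φ j) := by
    rintro x ⟨hx, hxB⟩
    obtain ⟨j, hj⟩ := Set.mem_iUnion.1 hxB
    exact Set.mem_iUnion.2 ⟨j, hj, fun h => hx (Set.mem_iUnion.2 ⟨j, hj, h⟩)⟩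
  calc μ (⋃ j, B j ∩ A (φ j))ᶜ = μ ((⋃ j, B j ∩ A (φ j))ᶜ ∩ ⋃ j, B j) :=
        (measure_inter_conull hB.2.2).symm
    _ ≤ ∑ j, μ (B j \ A (φ j)) := (measure_mono hsub).trans (measure_iUnion_fintype_le μ _)
    _ ≤ ∑ j, ENNReal.ofReal ((μ (B j)).toReal * ∑ i, negMulLog (condProb μ (A i) (B j))) :=
        Finset.sum_le_sum fun j _ => hφ j
    _ = ENNReal.ofReal (condEntropy' μ A B) :=
        (ENNReal.ofReal_sum_of_nonneg fun j _ => mul_sum_negMulLog_condProb_nonneg A (B j)).symm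

lemma IsPartition.exists_measure_compl_le_rokhlinDist [IsFiniteMeasure μ] [NeZero μ]
    {A : ι → Set X} {B : κ → Set X}
    (hA : IsPartition μ A) (hB : IsPartition μ B) :
    ∃ G : Set X, MeasurableSet G ∧ μ Gᶜ ≤ ENNReal.ofReal (rokhlinDist μ A B) ∧
      ∀ x ∈ G, ∀ y ∈ G, (∀ j, x ∈ B j → y ∈ B j) → ∃ i, x ∈ A i ∧ y ∈ A i := by
  obtain ⟨φ, hφ⟩ := exists_measure_compl_iUnion_inter_le_condEntropy' hA hB
  exact ⟨⋃ j, B j ∩ A (φ j), .iUnion fun j => (hB.1 j).inter (hA.1 _),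
    hφ.trans (ENNReal.ofReal_le_ofReal (condEntropy'_le_rokhlinDist A B)),
    fun x hx y hy => exists_mem_and_mem_of_mem_iUnion_inter hB.2.1 hx hy⟩

end Entropy

omit [MeasurableSpace X] in
open Classical in
lemma hamDist_le_of_forall_exists_mem_and_mem {r : ℕ} (E : Finset (Fin r → Set X))
    (G : (Fin r → Set X) → Set X) {x y : X}
    (hxy : ∀ α ∈ E, x ∈ G α → y ∈ G α → ∃ i, x ∈ α i ∧ y ∈ α i) :
    hamDist E x y ≤ ((#{α ∈ E | x ∉ G α} + #{α ∈ E | y ∉ G α} : ℕ) : ℝ) / #E := by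
  have hsub : {α ∈ E | ∀ i, ¬(x ∈ α i ∧ y ∈ α i)} ⊆
      {α ∈ E | x ∉ G α} ∪ {α ∈ E | y ∉ G α} := by
    intro α hα
    simp only [Finset.mem_filter, Finset.mem_union] at hα ⊢
    by_contra! h
    obtain ⟨i, hi⟩ := hxy α hα.1 (h.1 hα.1) (h.2 hα.1)
    exact hα.2 i hi
  unfold hamDist
  gcongr
  exact (Finset.card_le_card hsub).trans (Finset.card_union_le _ _)

open Classical in
lemma measure_lt_card_filter_not_mem_le {ι : Type*} (μ : Measure X) (E : Finset ι)
    {G : ι → Set X} (hGm : ∀ a ∈ E, MeasurableSet (G a)) {c δ : ℝ} (hc : 0 < c)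
    (hGμ : ∀ a ∈ E, μ (G a)ᶜ ≤ ENNReal.ofReal δ) :
    μ {x | c * #E < (#{a ∈ E | x ∉ G a} : ℝ)} ≤ ENNReal.ofReal (δ / c) := by
  rcases E.eq_empty_or_nonempty with rfl | hE
  · simp
  set f : X → ℝ≥0∞ := fun x => ∑ a ∈ E, (G a)ᶜ.indicator 1 x
  have hf : ∀ x, f x = #{a ∈ E | x ∉ G a} := fun x => by
    simp [f, Finset.card_filter, Set.indicator_apply]
  have hfm : Measurable f :=
    Finset.measurable_sum _ fun a ha => measurable_const.indicator (hGm a ha).compl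
  have hint : ∫⁻ x, f x ∂μ ≤ #E * ENNReal.ofReal δ := by
    simp only [f]
    rw [lintegral_finsetSum (f := fun a => (G a)ᶜ.indicator 1) _
      fun a ha => measurable_const.indicator (hGm a ha).compl]
    calc ∑ a ∈ E, ∫⁻ x, (G a)ᶜ.indicator 1 x ∂μ = ∑ a ∈ E, μ (G a)ᶜ :=
          Finset.sum_congr rfl fun a ha => lintegral_indicator_one (hGm a ha).compl
      _ ≤ ∑ _a ∈ E, ENNReal.ofReal δ := Finset.sum_le_sum hGμ
      _ = #E * ENNReal.ofReal δ := by rw [Finset.sum_const, nsmul_eq_mul]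
  have hcE : 0 < c * #E := mul_pos hc (by exact_mod_cast hE.card_pos)
  calc μ {x | c * #E < (#{a ∈ E | x ∉ G a} : ℝ)}
      ≤ μ {x | ENNReal.ofReal (c * #E) ≤ f x} := measure_mono fun x hx => by
        rw [Set.mem_ofPred_eq, hf, ← ENNReal.ofReal_natCast]
        exact ENNReal.ofReal_le_ofReal (le_of_lt hx)
    _ ≤ (∫⁻ x, f x ∂μ) / ENNReal.ofReal (c * #E) :=
        meas_ge_le_lintegral_div hfm.aemeasurable (ENNReal.ofReal_pos.2 hcE).ne'
          ENNReal.ofReal_ne_top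
    _ ≤ #E * ENNReal.ofReal δ / ENNReal.ofReal (c * #E) := by gcongr
    _ = ENNReal.ofReal (δ / c) := by
        rw [← ENNReal.ofReal_natCast, ← ENNReal.ofReal_mul (Nat.cast_nonneg _),
          ← ENNReal.ofReal_div_of_pos hcE]
        congr 1
        field_simp

lemma exists_finset_subset_card_le_forall_exists_eq {α κ : Type*} [Fintype κ] (W : Set α)
    (ℓ : α → κ) :
    ∃ D : Finset α, ↑D ⊆ W ∧ D.card ≤ Fintype.card κ ∧ ∀ y ∈ W, ∃ x ∈ D, ℓ x = ℓ y := by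
  obtain ⟨u, huW, hu⟩ := Set.exists_subset_bijOn W ℓ
  have hfin : u.Finite := Set.Finite.of_finite_image (Set.toFinite _) hu.injOn
  refine ⟨hfin.toFinset, by simpa using huW, ?_, fun y hy => ?_⟩
  · exact Finset.card_le_card_of_injOn ℓ (fun _ _ => Finset.mem_univ _) (by simpa using hu.injOn)
  · obtain ⟨x, hx, hxy⟩ := hu.surjOn ⟨y, hy, rfl⟩
    exact ⟨x, by simpa using hx, hxy⟩

lemma exists_card_le_measure_iUnion_hamBall_gt {κ : Type*} [Fintype κ] (μ : Measure X)
    [IsProbabilityMeasure μ] {r : ℕ} (E : Finset (Fin r → Set X)) (ℓ : X → κ)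
    (G : (Fin r → Set X) → Set X) {ε : ℝ} (hε : 0 < ε) (hε1 : ε ≤ 1)
    (hGm : ∀ α ∈ E, MeasurableSet (G α)) (hGμ : ∀ α ∈ E, μ (G α)ᶜ ≤ ENNReal.ofReal (ε ^ 2 / 6))
    (hG : ∀ α ∈ E, ∀ x ∈ G α, ∀ y ∈ G α, ℓ x = ℓ y → ∃ i, x ∈ α i ∧ y ∈ α i) :
    ∃ D : Finset X, D.card ≤ Fintype.card κ ∧
      1 - ENNReal.ofReal ε < μ (⋃ x ∈ D, hamBall E x ε) := by
  classical
  set W := {x | (#{α ∈ E | x ∉ G α} : ℝ) ≤ ε / 3 * #E}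
  -- Markov's inequality at level `ε/3`: `(ε²/6) / (ε/3) = ε/2`.
  have hWc : μ Wᶜ ≤ ENNReal.ofReal (ε / 2) := by
    convert measure_lt_card_filter_not_mem_le μ E hGm (by positivity : 0 < ε / 3) hGμ using 2
    · ext x
      simp [W]
    · field_simp
      ring
  obtain ⟨D, hDW, hD, hcell⟩ := exists_finset_subset_card_le_forall_exists_eq W ℓ
  refine ⟨D, hD, ?_⟩
  have hcover : W ⊆ ⋃ x ∈ D, hamBall E x ε := by
    intro y hy
    obtain ⟨x, hxD, hxy⟩ := hcell y hy
    have hx : (#{α ∈ E | x ∉ G α} : ℝ) ≤ ε / 3 * #E := hDW hxD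
    have hy' : (#{α ∈ E | y ∉ G α} : ℝ) ≤ ε / 3 * #E := hy
    refine Set.mem_iUnion₂.2 ⟨x, hxD, ?_⟩
    calc hamDist E x y ≤ ((#{α ∈ E | x ∉ G α} + #{α ∈ E | y ∉ G α} : ℕ) : ℝ) / #E :=
          hamDist_le_of_forall_exists_mem_and_mem E G fun α hα hxG hyG =>
            hG α hα x hxG y hyG hxy
      _ ≤ 2 * ε / 3 := div_le_of_le_mul₀ (Nat.cast_nonneg _) (by positivity) <| by
          push_cast
          linarith
      _ < ε := by linarith
  calc 1 - ENNReal.ofReal ε < 1 - ENNReal.ofReal (ε / 2) :=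
        (ENNReal.cancel_of_ne (ENNReal.sub_ne_top ENNReal.one_ne_top)).tsub_lt_tsub_left_of_le
          (ENNReal.ofReal_le_one.2 hε1) ((ENNReal.ofReal_lt_ofReal_iff hε).2 (by linarith))
    _ ≤ 1 - μ Wᶜ := tsub_le_tsub_left hWc 1
    _ ≤ μ W := tsub_le_iff_right.2 (by simpa using measure_univ_le_add_compl (μ := μ) W)
    _ ≤ μ (⋃ x ∈ D, hamBall E x ε) := measure_mono hcover

theorem boundedMeanComplexity_of_precompact_general (μ : Measure X) [IsProbabilityMeasure μ]
    {r : ℕ} (K : Set (Fin r → Set X)) (hK : ∀ α ∈ K, IsPartition μ α)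
    (hpre : TotBddIn (rokhlinDist μ) K) :
    ∀ ε > (0 : ℝ), ∃ C : ℕ, ∀ E : Finset (Fin r → Set X), ↑E ⊆ K →
      ∃ D : Finset X, D.card ≤ C ∧
        μ (⋃ x ∈ D, hamBall E x ε) > 1 - ENNReal.ofReal ε := by
  intro ε hε
  set ε' := min ε 1
  have hε' : 0 < ε' := lt_min hε one_pos
  obtain ⟨F, hFK, hF⟩ := hpre (ε' ^ 2 / 6) (by positivity)
  -- Points with equal labels lie in the same atom of every `β ∈ F`.
  set ℓ : X → F → Set (Fin r) := fun x β => {j | x ∈ (β : Fin r → Set X) j}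
  have hgood : ∀ α ∈ K, ∃ G : Set X, MeasurableSet G ∧ μ Gᶜ ≤ ENNReal.ofReal (ε' ^ 2 / 6) ∧
      ∀ x ∈ G, ∀ y ∈ G, ℓ x = ℓ y → ∃ i, x ∈ α i ∧ y ∈ α i := by
    intro α hα
    obtain ⟨β, hβF, hαβ⟩ := hF α hα
    obtain ⟨G, hGm, hGμ, hG⟩ := (hK α hα).exists_measure_compl_le_rokhlinDist (hK β (hFK hβF))
    refine ⟨G, hGm, hGμ.trans (ENNReal.ofReal_le_ofReal hαβ.le), fun x hx y hy hxy => ?_⟩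
    exact hG x hx y hy fun j => (Set.ext_iff.1 (congrFun hxy ⟨β, hβF⟩) j).1
  choose! G hGm hGμ hG using hgood
  refine ⟨Fintype.card (F → Set (Fin r)), fun E hE => ?_⟩
  obtain ⟨D, hD, hμD⟩ := exists_card_le_measure_iUnion_hamBall_gt μ E ℓ G hε' (min_le_right _ _)
    (fun α hα => hGm α (hE hα)) (fun α hα => hGμ α (hE hα)) fun α hα => hG α (hE hα)
  refine ⟨D, hD, ?_⟩
  calc 1 - ENNReal.ofReal ε ≤ 1 - ENNReal.ofReal ε' :=
        tsub_le_tsub_left (ENNReal.ofReal_le_ofReal (min_le_left _ _)) 1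
    _ < μ (⋃ x ∈ D, hamBall E x ε') := hμD
    _ ≤ μ (⋃ x ∈ D, hamBall E x ε) :=
        measure_mono (Set.iUnion₂_mono fun x _ y (hy : hamDist E x y < ε') =>
          hy.trans_le (min_le_left _ _))

/-- If `K ⊆ 𝔓_r` is precompact in the Rokhlin metric, then `K` has
bounded mean complexity: for every `ε > 0` there is `C` such that for every finite
`E ⊆ K`, all but `ε` of the measure of `X` is covered by at most `C` Hamming balls of
radius `ε` with respect to `E`. -/
theorem boundedMeanComplexity_of_precompact (μ : Measure X) [IsProbabilityMeasure μ]
    {r : ℕ} (hr : 2 ≤ r) (K : Set (Fin r → Set X)) (hK : ∀ α ∈ K, IsPartition μ α)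
    (hpre : TotBddIn (rokhlinDist μ) K) :
    ∀ ε > (0 : ℝ), ∃ C : ℕ, ∀ E : Finset (Fin r → Set X), ↑E ⊆ K →
      ∃ D : Finset X, D.card ≤ C ∧
        μ (⋃ x ∈ D, hamBall E x ε) > 1 - ENNReal.ofReal ε :=
  boundedMeanComplexity_of_precompact_general μ K hK hpre
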